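/- arXiv:1904.01708 — 7 statements merged into one kernel-verified Lean document; each statement's English description precedes it below -/
import Mathlib

section
/- Let $G$ be a finite group acting on a set $X$ such that every point of $X$ has stabilizer conjugate to a fixed subgroup $H \leq G$. Then the map sending the orbit of a point $x \in X^H$ to the formal sum $\sum_{gH \in G/H} g x$ induces a bijection between the quotient of $X^H$ by the action of the Weyl group $W_G(H) = N_G(H)/H$ and the set of $G$-fixed elements of the free abelian monoid on $X$ supported on a single $G$-orbit. -/
/-!
A point `x ∈ X^H` has stabilizer containing `H` and, being conjugate to `H`, of the same order, so
its stabilizer is exactly `H`. Hence `∑_{gH ∈ G/H} g • x` is the sum of the orbit of `x`. Every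
orbit meets `X^H` (translate any point by the conjugating element), and if `n • x = y` with
`x, y ∈ X^H` then `H = Stab(y) = n Stab(x) n⁻¹ = n H n⁻¹`, so `n ∈ N_G(H)`.
-/

namespace MulAction

variable {G X : Type*} [Group G] [MulAction G X]

section OrbitSum

variable [Finite G]

variable (G) in
noncomputable def orbitSum (x : X) : X →₀ ℕ :=
  Finsupp.ofSupportFinite ((orbit G x).indicator 1)
    ((Set.finite_range _).subset Set.support_indicator_subset)

theorem orbitSum_apply_of_mem {x y : X} (hy : y ∈ orbit G x) : orbitSum G x y = 1 := by
  simp [orbitSum, Finsupp.ofSupportFinite_coe, hy]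

theorem orbitSum_apply_of_notMem {x y : X} (hy : y ∉ orbit G x) : orbitSum G x y = 0 := by
  simp [orbitSum, Finsupp.ofSupportFinite_coe, hy]

theorem coe_support_orbitSum (x : X) : ((orbitSum G x).support : Set X) = orbit G x := by
  ext y
  by_cases hy : y ∈ orbit G x
  · simp [orbitSum_apply_of_mem hy, hy]
  · simp [orbitSum_apply_of_notMem hy, hy]

theorem orbitSum_eq_orbitSum_iff {x y : X} : orbitSum G x = orbitSum G y ↔ y ∈ orbit G x := by
  constructor
  · intro h
    by_contra hxy
    have hy : orbitSum G x y = 1 := h ▸ orbitSum_apply_of_mem (mem_orbit_self y)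
    rw [orbitSum_apply_of_notMem hxy] at hy
    exact zero_ne_one hy
  · intro h
    simp only [orbitSum, orbit_eq_iff.mpr h]

theorem eq_orbitSum_of_coe_support_eq {f : X →₀ ℕ} {x : X}
    (hsupp : (f.support : Set X) = orbit G x) (hone : ∀ y ∈ orbit G x, f y = 1) :
    f = orbitSum G x := by
  ext y
  by_cases hy : y ∈ orbit G x
  · rw [hone y hy, orbitSum_apply_of_mem hy]
  · rw [orbitSum_apply_of_notMem hy]
    rwa [← hsupp, Finset.mem_coe, Finsupp.notMem_support_iff] at hy

end OrbitSum

theorem card_smul_eq_of_mem_orbit {x y : X} (hy : y ∈ orbit G x) :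
    Nat.card {g : G // g • x = y} = Nat.card (stabilizer G x) := by
  obtain ⟨g₀, rfl⟩ := hy
  refine (Nat.card_congr (Equiv.subtypeEquiv (Equiv.mulLeft g₀) fun h => ?_)).symm
  simp [mul_smul, mem_stabilizer_iff]

theorem card_smul_eq_of_notMem_orbit {x y : X} (hy : y ∉ orbit G x) :
    Nat.card {g : G // g • x = y} = 0 :=
  have : IsEmpty {g : G // g • x = y} := ⟨fun g => hy ⟨g, g.2⟩⟩
  Nat.card_of_isEmpty

theorem orbitSum_apply_eq_card_div [Finite G] (x y : X) :
    orbitSum G x y = Nat.card {g : G // g • x = y} / Nat.card (stabilizer G x) := by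
  by_cases hy : y ∈ orbit G x
  · rw [orbitSum_apply_of_mem hy, card_smul_eq_of_mem_orbit hy, Nat.div_self Nat.card_pos]
  · rw [orbitSum_apply_of_notMem hy, card_smul_eq_of_notMem_orbit hy, Nat.zero_div]

section ConjugateStabilizers

variable {H : Subgroup G}

theorem stabilizer_eq_of_le_of_eq_map_conj [Finite G] {x : X} {g : G}
    (hle : H ≤ stabilizer G x) (hx : stabilizer G x = H.map (MulAut.conj g).toMonoidHom) :
    stabilizer G x = H := by
  refine (Subgroup.eq_of_le_of_card_ge hle ?_).symm
  rw [hx, Subgroup.card_map_of_injective (MulAut.conj g).injective]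

theorem stabilizer_inv_smul_eq_of_eq_map_conj {x : X} {g : G}
    (hx : stabilizer G x = H.map (MulAut.conj g).toMonoidHom) :
    stabilizer G (g⁻¹ • x) = H := by
  rw [stabilizer_smul_eq_stabilizer_map_conj, hx, Subgroup.map_map]
  ext h
  simp [MulAut.conj_apply, mul_assoc]

theorem mem_normalizer_of_stabilizer_eq {x : X} {n : G}
    (hx : stabilizer G x = H) (hnx : stabilizer G (n • x) = H) :
    n ∈ Subgroup.normalizer (H : Set G) := by
  have hconj := stabilizer_smul_eq_stabilizer_map_conj n x
  rw [hx, hnx] at hconj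
  exact Subgroup.mem_normalizer_iff_map_conj_eq.mpr hconj.symm

end ConjugateStabilizers

end MulAction

open MulAction

/-- If every point of `X` has stabilizer conjugate to `H`, then `x ↦ ∑_{gH ∈ G/H} g • x`
induces a bijection between the quotient of `X^H` by the Weyl group `W_G(H) = N_G(H)/H`
and the `G`-fixed elements of the free abelian monoid on `X` supported on a single orbit
(the sums of single `G`-orbits). -/
theorem stmt2 {G X : Type*} [Group G] [Fintype G] [MulAction G X] (H : Subgroup G)
    (hX : ∀ x : X, ∃ g : G,
        MulAction.stabilizer G x = Subgroup.map (MulAut.conj g).toMonoidHom H) :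
    ∃ φ : {x : X // ∀ h ∈ H, h • x = x} → (X →₀ ℕ),
      -- φ x is the formal sum ∑_{gH ∈ G/H} g • x : its coefficient at y is the
      -- number of cosets gH with g • x = y
      (∀ (x : {x : X // ∀ h ∈ H, h • x = x}) (y : X),
          φ x y = Nat.card {g : G // g • (x : X) = y} / Nat.card H) ∧
      -- φ lands in the set of sums of single G-orbits (which are G-fixed)
      (∀ x : {x : X // ∀ h ∈ H, h • x = x}, ∃ x0 : X,
          (↑(φ x).support : Set X) = MulAction.orbit G x0 ∧
          ∀ y ∈ MulAction.orbit G x0, φ x y = 1) ∧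
      -- φ is surjective onto that set
      (∀ f : X →₀ ℕ,
          (∃ x0 : X, (↑f.support : Set X) = MulAction.orbit G x0 ∧
            ∀ y ∈ MulAction.orbit G x0, f y = 1) →
          ∃ x, φ x = f) ∧
      -- φ identifies exactly the W_G(H)-orbits on X^H
      (∀ x y : {x : X // ∀ h ∈ H, h • x = x},
          φ x = φ y ↔ ∃ n ∈ Subgroup.normalizer (H : Set G), n • (x : X) = (y : X)) := by
  have hstab : ∀ x : {x : X // ∀ h ∈ H, h • x = x}, stabilizer G (x : X) = H := fun x => by
    obtain ⟨g, hg⟩ := hX x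
    exact stabilizer_eq_of_le_of_eq_map_conj (fun h hh => x.2 h hh) hg
  refine ⟨fun x => orbitSum G (x : X), fun x y => ?_,
    fun x => ⟨x, coe_support_orbitSum _, fun y hy => orbitSum_apply_of_mem hy⟩, ?_, fun x y => ?_⟩
  · rw [orbitSum_apply_eq_card_div, hstab]
  · rintro f ⟨x₀, hsupp, hone⟩
    obtain ⟨g, hg⟩ := hX x₀
    have hfix : stabilizer G (g⁻¹ • x₀) = H := stabilizer_inv_smul_eq_of_eq_map_conj hg
    refine ⟨⟨g⁻¹ • x₀, fun h hh => hfix.ge hh⟩, ?_⟩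
    rw [eq_orbitSum_of_coe_support_eq hsupp hone]
    exact orbitSum_eq_orbitSum_iff.mpr (mem_orbit_smul _ _)
  · rw [orbitSum_eq_orbitSum_iff]
    constructor
    · rintro ⟨n, hn : n • (x : X) = y⟩
      refine ⟨n, mem_normalizer_of_stabilizer_eq (hstab x) ?_, hn⟩
      rw [hn]
      exact hstab y
    · rintro ⟨n, -, hn⟩
      exact ⟨n, hn⟩
end

section
/- Let $G$ be a finite group, $\rho_G$ its real regular representation, and $\overline{\mathbb{R}^n}$ the reduced standard $(n-1)$-dimensional real representation of $\Sigma_n$ (the orthogonal complement of the diagonal in the permutation representation $\mathbb{R}^n$). Let $\Gamma \leq G \times \Sigma_n$ be a subgroup such that $\Gamma \cap (1 \times \Sigma_n)$ acts nontransitively on $\{1,\ldots,n\}$. Then the $\Gamma$-fixed subspace of $\rho_G \otimes \overline{\mathbb{R}^n}$ is nonzero. -/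
/-!
The `Γ`-orbits of `(1, i)` and `(1, j)` in `G × Fin n` are distinct, since `Γ ∩ (1 × Σₙ)` does
not carry `i` to `j`, yet they meet the same row `{1} × Fin n`. Their indicators `φ, ψ` are
`Γ`-invariant, and so are their row sums `Σφ, Σψ`, because `Γ` permutes the rows. Hence
`φ · Σψ - ψ · Σφ` is an invariant function with zero row sums, and it is positive at `(1, i)`.
-/

open MulAction Finset

abbrev Prod.mulActionProd (M N α β : Type*) [Monoid M] [Monoid N] [MulAction M α]
    [MulAction N β] : MulAction (M × N) (α × β) where
  smul p x := (p.1 • x.1, p.2 • x.2)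
  one_smul x := Prod.ext (one_smul M x.1) (one_smul N x.2)
  mul_smul p q x := Prod.ext (mul_smul p.1 q.1 x.1) (mul_smul p.2 q.2 x.2)

lemma orbit_indicator_smul {Γ X : Type*} [Group Γ] [MulAction Γ X] (x₀ : X) (g : Γ) (x : X) :
    (orbit Γ x₀).indicator (1 : X → ℝ) (g • x) = (orbit Γ x₀).indicator 1 x := by
  have hmem : g • x ∈ orbit Γ x₀ ↔ x ∈ orbit Γ x₀ := by
    rw [← orbit_eq_iff, orbit_smul, orbit_eq_iff]
  classical exact if_congr hmem rfl rfl

section FiberSum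

variable {Γ X Y : Type*} [Group Γ] [MulAction Γ X] [Fintype X] [DecidableEq Y] (π : X → Y)

def fiberSum (φ : X → ℝ) (x : X) : ℝ :=
  ∑ x' with π x' = π x, φ x'

variable {π}

lemma fiberSum_smul (hπ : ∀ (g : Γ) (x x' : X), π x = π x' → π (g • x) = π (g • x'))
    {φ : X → ℝ} (hφ : ∀ (g : Γ) x, φ (g • x) = φ x) (g : Γ) (x : X) :
    fiberSum π φ (g • x) = fiberSum π φ x := by
  have hfiber : ∀ x', π (g • x') = π (g • x) ↔ π x' = π x := fun x' =>
    ⟨fun h => by simpa using hπ g⁻¹ _ _ h, hπ g _ _⟩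
  calc fiberSum π φ (g • x)
      = ∑ x', if π (g • x') = π (g • x) then φ (g • x') else 0 := by
        rw [fiberSum, sum_filter]
        exact (Equiv.sum_comp (toPerm g) _).symm
    _ = fiberSum π φ x := by simp only [hfiber, hφ, fiberSum, sum_filter]

lemma sum_fiber_mul_fiberSum (φ ψ : X → ℝ) (y : Y) :
    ∑ x with π x = y, φ x * fiberSum π ψ x =
      (∑ x with π x = y, φ x) * ∑ x with π x = y, ψ x := by
  rw [sum_mul]
  refine sum_congr rfl fun x hx => ?_
  rw [fiberSum, (mem_filter.mp hx).2]

theorem exists_invariant_ne_zero_fiber_sums_eq_zero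
    (hπ : ∀ (g : Γ) (x x' : X), π x = π x' → π (g • x) = π (g • x'))
    {x₁ x₂ : X} (hx : x₂ ∉ orbit Γ x₁) (hπx : π x₁ = π x₂) :
    ∃ f : X → ℝ, f ≠ 0 ∧ (∀ y, ∑ x with π x = y, f x = 0) ∧ ∀ (g : Γ) x, f (g • x) = f x := by
  set φ := (orbit Γ x₁).indicator (1 : X → ℝ)
  set ψ := (orbit Γ x₂).indicator (1 : X → ℝ)
  refine ⟨φ * fiberSum π ψ - ψ * fiberSum π φ, fun h => ?_, fun y => ?_, fun g x => ?_⟩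
  · have hψx₁ : ψ x₁ = 0 := Set.indicator_of_notMem (mt mem_orbit_symm.mp hx) _
    have hφx₁ : φ x₁ = 1 := Set.indicator_of_mem (mem_orbit_self x₁) _
    have hpos : 0 < fiberSum π ψ x₁ := by
      calc (0 : ℝ) < ψ x₂ := by simp [ψ, mem_orbit_self]
        _ ≤ fiberSum π ψ x₁ :=
          single_le_sum (f := ψ) (fun x _ => Set.indicator_nonneg (fun _ _ => zero_le_one) x)
            (mem_filter.mpr ⟨mem_univ x₂, hπx.symm⟩)
    have := congrFun h x₁
    simp only [Pi.sub_apply, Pi.mul_apply, hφx₁, hψx₁, Pi.zero_apply] at this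
    linarith
  · simp only [Pi.sub_apply, Pi.mul_apply]
    rw [sum_sub_distrib, sum_fiber_mul_fiberSum, sum_fiber_mul_fiberSum, mul_comm, sub_self]
  · simp only [Pi.sub_apply, Pi.mul_apply, φ, ψ, orbit_indicator_smul,
      fiberSum_smul hπ (orbit_indicator_smul _)]

end FiberSum

lemma Fintype.sum_filter_fst_eq {α β M : Type*} [Fintype α] [Fintype β] [DecidableEq α]
    [AddCommMonoid M] (f : α × β → M) (a : α) : ∑ x with x.1 = a, f x = ∑ b, f (a, b) := by
  rw [sum_filter, Fintype.sum_prod_type, Fintype.sum_eq_single a fun a' ha' => by simp [ha']]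
  simp

/-- If `Γ ≤ G × Σ_n` has nontransitive intersection with `1 × Σ_n`, then the
`Γ`-fixed subspace of `ρ_G ⊗ ℝ^n(reduced)` is nonzero.  Here `ρ_G ⊗ ℝ^n` is modeled
as functions `G × Fin n → ℝ`, the reduced part being those with all row sums zero,
with `(g,σ)` acting by `((g,σ) • f)(a,i) = f(g⁻¹a, σ⁻¹ i)`. -/
theorem stmt3 {G : Type*} [Group G] [Fintype G] (n : ℕ)
    (Γ : Subgroup (G × Equiv.Perm (Fin n)))
    (hΓ : ¬ ∀ i j : Fin n, ∃ σ : Equiv.Perm (Fin n), ((1 : G), σ) ∈ Γ ∧ σ i = j) :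
    ∃ f : G × Fin n → ℝ, f ≠ 0 ∧ (∀ a : G, ∑ i : Fin n, f (a, i) = 0) ∧
      ∀ q ∈ Γ, ∀ (a : G) (i : Fin n), f (q.1 * a, q.2 i) = f (a, i) := by
  classical
  let := Prod.mulActionProd G (Equiv.Perm (Fin n)) G (Fin n)
  simp only [not_forall, not_exists, not_and] at hΓ
  obtain ⟨i, j, hij⟩ := hΓ
  have hj : ((1 : G), j) ∉ orbit Γ ((1 : G), i) := by
    rintro ⟨⟨⟨g, σ⟩, hq⟩, hgσ⟩
    obtain rfl : g = 1 := (mul_one g).symm.trans (congrArg Prod.fst hgσ)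
    exact hij σ hq (congrArg Prod.snd hgσ)
  obtain ⟨f, hf0, hsum, hinv⟩ := exists_invariant_ne_zero_fiber_sums_eq_zero (Γ := Γ)
    (π := Prod.fst) (fun g x x' h => congrArg (g.1.1 * ·) h) hj rfl
  exact ⟨f, hf0, fun a => Fintype.sum_filter_fst_eq f a ▸ hsum a,
    fun q hq a i => hinv ⟨q, hq⟩ (a, i)⟩
end

section
/- Let $p$ be a prime, $\sigma \in \Sigma_p$ a $p$-cycle, and $\Phi \leq \Sigma_p$ a nontrivial subgroup normalized by $\sigma$ (i.e., $\sigma \Phi \sigma^{-1} = \Phi$). Then $\Phi$ acts transitively on $\{1, \ldots, p\}$. -/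
/-!
The normalizer of `Φ` contains the `p`-cycle `σ`, so it acts transitively on the `p` points;
a transitive action on a set of prime cardinality has no nontrivial blocks, and the orbits of
the normal subgroup `Φ` of that normalizer are blocks. As `Φ` moves some point, its orbits are
not singletons, hence there is only one.
-/

open Equiv MulAction

theorem Equiv.Perm.IsCycle.isPretransitive_of_mem {α : Type*} [Fintype α] [DecidableEq α]
    {σ : Perm α} (hσ : σ.IsCycle) (hsupp : σ.support = Finset.univ)
    {G : Subgroup (Perm α)} (hσG : σ ∈ G) : IsPretransitive G α := by
  have hmove (a : α) : σ a ≠ a := Perm.mem_support.mp (hsupp ▸ Finset.mem_univ a)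
  refine ⟨fun a b => ?_⟩
  obtain ⟨k, hk⟩ := hσ.sameCycle (hmove a) (hmove b)
  exact ⟨⟨σ ^ k, G.zpow_mem hσG k⟩, hk⟩

namespace MulAction

variable {G α : Type*} [Group G] [MulAction G α]

theorem fixedPoints_ne_univ_of_ne_bot [FaithfulSMul G α] {H : Subgroup G} (hH : H ≠ ⊥) :
    fixedPoints H α ≠ Set.univ := by
  obtain ⟨h, hh⟩ := (Subgroup.ne_bot_iff_exists_ne_one).mp hH
  intro hfix
  refine hh (Subtype.ext (eq_of_smul_eq_smul (α := α) fun a => ?_))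
  rw [OneMemClass.coe_one, one_smul]
  exact (Set.eq_univ_iff_forall.mp hfix a) h

theorem isPretransitive_of_isPretransitive_normalizer_of_prime_card
    (hp : (Nat.card α).Prime) {H : Subgroup G}
    [IsPretransitive (Subgroup.normalizer (H : Set G)) α]
    (hH : fixedPoints H α ≠ Set.univ) : IsPretransitive H α := by
  set N := Subgroup.normalizer (H : Set G)
  have := IsPreprimitive.of_prime_card (G := N) hp
  have hfix : fixedPoints (H.subgroupOf N) α ⊆ fixedPoints H α :=
    fun a ha ⟨h, hh⟩ => ha ⟨⟨h, Subgroup.le_normalizer hh⟩, hh⟩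
  have : IsPretransitive (H.subgroupOf N) α :=
    IsQuasiPreprimitive.isPretransitive_of_normal
      fun huniv => hH (Set.eq_univ_of_univ_subset (huniv ▸ hfix))
  refine ⟨fun a b => ?_⟩
  obtain ⟨⟨⟨g, _⟩, hg⟩, hgab⟩ := exists_smul_eq (H.subgroupOf N) a b
  exact ⟨⟨g, hg⟩, hgab⟩

end MulAction

/-- A nontrivial subgroup of `Σ_p` normalized by a `p`-cycle acts transitively. -/
theorem stmt8 {p : ℕ} (hp : p.Prime) (σ : Equiv.Perm (Fin p))
    (hσc : σ.IsCycle) (hσs : σ.support.card = p)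
    (Φ : Subgroup (Equiv.Perm (Fin p))) (hΦ : Φ ≠ ⊥)
    (hnorm : Subgroup.map (MulAut.conj σ).toMonoidHom Φ = Φ) :
    ∀ i j : Fin p, ∃ τ ∈ Φ, τ i = j := by
  have hσN : σ ∈ Subgroup.normalizer (Φ : Set (Perm (Fin p))) :=
    Subgroup.mem_normalizer_iff_map_conj_eq.mpr hnorm
  have hsupp : σ.support = Finset.univ := Finset.eq_univ_of_card _ (by simpa using hσs)
  have := hσc.isPretransitive_of_mem hsupp hσN
  have : IsPretransitive Φ (Fin p) :=
    isPretransitive_of_isPretransitive_normalizer_of_prime_card (by simpa using hp)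
      (fixedPoints_ne_univ_of_ne_bot hΦ)
  intro i j
  obtain ⟨τ, hτ⟩ := exists_smul_eq Φ i j
  exact ⟨τ, τ.2, hτ⟩
end

section
/- Let $G$ be a finite $p$-group and let $f, f' : G \to \Sigma_p$ be two distinct group homomorphisms. Then the subgroup of $G \times \Sigma_p$ generated by the graphs $\Gamma_f = \{(g, f(g)) : g \in G\}$ and $\Gamma_{f'} = \{(g, f'(g)) : g \in G\}$ intersects $1 \times \Sigma_p$ in a subgroup that acts transitively on $\{1, \ldots, p\}$. -/
/-!
Let `K = {σ | (1, σ) ∈ ⟨Γ_f, Γ_f'⟩}`. It contains `f(g)⁻¹ f'(g) ≠ 1` for some `g`, and it is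
normalized by `f(G)` and `f'(G)`. One of these images is a nontrivial `p`-group, so the
normalizer of `K` has order divisible by `p`, hence contains a `p`-cycle and is transitive on the
`p` points. A transitive group of prime degree is primitive, and a nontrivial normal subgroup of
a primitive group is transitive; so `K` is transitive.
-/

open Equiv MulAction

theorem Subgroup.snd_mem_normalizer_comap_inr {G H : Type*} [Group G] [Group H]
    {C : Subgroup (G × H)} {x : G × H} (hx : x ∈ C) :
    x.2 ∈ Subgroup.normalizer (C.comap (MonoidHom.inr G H) : Set H) := by
  refine Subgroup.mem_normalizer_iff.mpr fun σ => ⟨fun hσ => ?_, fun hσ => ?_⟩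
  · rw [Subgroup.mem_comap]
    convert C.mul_mem (C.mul_mem hx hσ) (C.inv_mem hx) using 1
    ext <;> simp
  · rw [Subgroup.mem_comap]
    convert C.mul_mem (C.mul_mem (C.inv_mem hx) hσ) hx using 1
    ext <;> simp [mul_assoc]

section PrimeDegree

variable {α : Type*} [Fintype α] [DecidableEq α]

theorem Equiv.Perm.isPretransitive_of_card_dvd {H : Subgroup (Perm α)}
    (hp : (Fintype.card α).Prime) (hH : Fintype.card α ∣ Nat.card H) : IsPretransitive H α := by
  have : Fact (Fintype.card α).Prime := ⟨hp⟩
  obtain ⟨σ, hσ⟩ := exists_prime_orderOf_dvd_card' _ hH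
  have hσ_order : orderOf (σ : Perm α) = Fintype.card α := (Subgroup.orderOf_coe σ).trans hσ
  have hσ_cycle : (σ : Perm α).IsCycle := Perm.isCycle_of_prime_order'' hp hσ_order
  have hσ_moves : ∀ a, (σ : Perm α) a ≠ a := fun a => by
    rw [← Perm.mem_support,
      Finset.eq_univ_of_card _ (hσ_cycle.orderOf.symm.trans hσ_order)]
    exact Finset.mem_univ a
  refine ⟨fun a b => ?_⟩
  obtain ⟨n, hn⟩ := hσ_cycle.exists_pow_eq (hσ_moves a) (hσ_moves b)
  exact ⟨σ ^ n, hn⟩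

theorem Equiv.Perm.isPretransitive_of_card_dvd_card_normalizer {K : Subgroup (Perm α)}
    (hp : (Fintype.card α).Prime) (hK : K ≠ ⊥)
    (hN : Fintype.card α ∣ Nat.card (Subgroup.normalizer (K : Set (Perm α)))) :
    IsPretransitive K α := by
  have := isPretransitive_of_card_dvd hp hN
  have := IsPreprimitive.of_prime_card (G := Subgroup.normalizer (K : Set (Perm α))) (X := α)
    (by rwa [Nat.card_eq_fintype_card])
  obtain ⟨σ, hσ1⟩ := K.ne_bot_iff_exists_ne_one.mp hK
  obtain ⟨a, ha⟩ : ∃ a, (σ : Perm α) a ≠ a := by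
    by_contra! h
    exact hσ1 (Subtype.ext (Perm.ext h))
  have : IsPretransitive (K.subgroupOf (Subgroup.normalizer (K : Set (Perm α)))) α := by
    refine IsQuasiPreprimitive.isPretransitive_of_normal fun h => ha ?_
    have ha_fixed : a ∈ fixedPoints _ α := h ▸ Set.mem_univ a
    exact ha_fixed ⟨⟨σ, K.le_normalizer σ.2⟩, Subgroup.mem_subgroupOf.mpr σ.2⟩
  refine ⟨fun a b => ?_⟩
  obtain ⟨n, hn⟩ := exists_smul_eq (K.subgroupOf (Subgroup.normalizer (K : Set (Perm α)))) a b
  exact ⟨⟨_, n.2⟩, hn⟩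

end PrimeDegree

theorem IsPGroup.dvd_card_range {p : ℕ} [Fact p.Prime] {G H : Type*} [Group G] [Group H]
    (hG : IsPGroup p G) {f : G →* H} (hf : f ≠ 1) : p ∣ Nat.card f.range :=
  (hG.of_surjective _ f.rangeRestrict_surjective).card_eq_or_dvd.resolve_left fun h =>
    hf (f.range_eq_bot_iff.mp (Subgroup.card_eq_one.mp h))

theorem stmt9_general {p : ℕ} [Fact p.Prime] {G : Type*} [Group G]
    (hG : IsPGroup p G) (f f' : G →* Equiv.Perm (Fin p)) (hff : f ≠ f') :
    ∀ i j : Fin p, ∃ σ : Equiv.Perm (Fin p),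
      ((1 : G), σ) ∈ Subgroup.closure
        ((Set.range fun g : G => ((g, f g) : G × Equiv.Perm (Fin p))) ∪
         (Set.range fun g : G => ((g, f' g) : G × Equiv.Perm (Fin p)))) ∧
      σ i = j := by
  set C := Subgroup.closure
    ((Set.range fun g : G => ((g, f g) : G × Perm (Fin p))) ∪
      (Set.range fun g : G => ((g, f' g) : G × Perm (Fin p))))
  set K := C.comap (MonoidHom.inr G (Perm (Fin p)))
  have hp : (Fintype.card (Fin p)).Prime := by rw [Fintype.card_fin]; exact Fact.out
  have hfC : ∀ g, (g, f g) ∈ C := fun g => Subgroup.subset_closure (Or.inl ⟨g, rfl⟩)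
  have hf'C : ∀ g, (g, f' g) ∈ C := fun g => Subgroup.subset_closure (Or.inr ⟨g, rfl⟩)
  obtain ⟨g, hg⟩ := DFunLike.ne_iff.mp hff
  have hK : K ≠ ⊥ := by
    refine K.ne_bot_iff_exists_ne_one.mpr ⟨⟨(f g)⁻¹ * f' g, ?_⟩, ?_⟩
    · rw [Subgroup.mem_comap]
      convert C.mul_mem (C.inv_mem (hfC g)) (hf'C g) using 1
      ext <;> simp
    · simpa [inv_mul_eq_one] using hg
  obtain ⟨φ, hφ, hφC⟩ : ∃ φ : G →* Perm (Fin p), φ ≠ 1 ∧ ∀ g, (g, φ g) ∈ C := by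
    by_cases hf : f = 1
    · exact ⟨f', hf ▸ hff.symm, hf'C⟩
    · exact ⟨f, hf, hfC⟩
  have hφN : φ.range ≤ Subgroup.normalizer (K : Set (Perm (Fin p))) := by
    rintro _ ⟨g, rfl⟩
    exact Subgroup.snd_mem_normalizer_comap_inr (hφC g)
  have := Perm.isPretransitive_of_card_dvd_card_normalizer hp hK
    (by rw [Fintype.card_fin]; exact (hG.dvd_card_range hφ).trans (Subgroup.card_dvd_of_le hφN))
  intro i j
  obtain ⟨σ, hσ⟩ := exists_smul_eq K i j
  exact ⟨σ, σ.2, hσ⟩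

/-- If `f ≠ f' : G → Σ_p` are homomorphisms from a finite `p`-group, the subgroup of
`G × Σ_p` generated by their graphs intersects `1 × Σ_p` transitively. -/
theorem stmt9 {p : ℕ} [Fact p.Prime] {G : Type*} [Group G] [Finite G]
    (hG : IsPGroup p G) (f f' : G →* Equiv.Perm (Fin p)) (hff : f ≠ f') :
    ∀ i j : Fin p, ∃ σ : Equiv.Perm (Fin p),
      ((1 : G), σ) ∈ Subgroup.closure
        ((Set.range fun g : G => ((g, f g) : G × Equiv.Perm (Fin p))) ∪
         (Set.range fun g : G => ((g, f' g) : G × Equiv.Perm (Fin p)))) ∧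
      σ i = j :=
  stmt9_general hG f f' hff
end

section
/- Let $p$ be prime and $\Psi \leq \Sigma_p$ a nontrivial subgroup that does not act transitively on $\{1,\ldots,p\}$. Then the order of the quotient $N_{\Sigma_p}(\Psi)/\Psi$ of the normalizer of $\Psi$ by $\Psi$ is not divisible by $p$. -/
/-!
By Cauchy's theorem, if `p` divides `|N(Ψ)/Ψ|` then `N(Ψ)` contains an element of order `p`,
which in `Σ_p` is a `p`-cycle, so `N(Ψ)` acts transitively on the `p` points. The orbits of its
normal subgroup `Ψ` are then blocks of a transitive action on a set of prime size, hence all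
singletons (`Ψ = 1`) or the whole set (`Ψ` transitive).
-/

open MulAction Equiv

theorem MulAction.isPretransitive_or_forall_smul_eq_of_normal {G X : Type*} [Group G]
    [MulAction G X] [IsPretransitive G X] (hX : (Nat.card X).Prime) (N : Subgroup G)
    [N.Normal] : IsPretransitive N X ∨ ∀ n : N, ∀ x : X, n • x = x := by
  have : Finite X := Nat.finite_of_card_ne_zero hX.ne_zero
  by_cases h : ∃ x : X, orbit N x = Set.univ
  · obtain ⟨x, hx⟩ := h
    exact Or.inl ((isPretransitive_iff_orbit_eq_univ x).mpr hx)
  · push Not at h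
    refine Or.inr fun n x => ?_
    have hdvd :=
      (IsBlock.orbit_of_normal (G := G) (N := N) x).ncard_dvd_card ⟨x, mem_orbit_self x⟩
    rcases (Nat.dvd_prime hX).mp hdvd with h1 | hcard
    · exact (Set.ncard_le_one_iff_subsingleton.mp h1.le) (mem_orbit x n) (mem_orbit_self x)
    · rw [← Set.ncard_univ] at hcard
      exact absurd (Set.eq_of_subset_of_ncard_le (Set.subset_univ _) hcard.ge) (h x)

theorem Equiv.Perm.isPretransitive_of_mem_of_orderOf_eq_card {α : Type*} [Fintype α]
    (hα : (Fintype.card α).Prime) {H : Subgroup (Perm α)} {σ : Perm α} (hσH : σ ∈ H)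
    (hσ : orderOf σ = Fintype.card α) : IsPretransitive H α := by
  classical
  have hcyc := Perm.isCycle_of_prime_order'' hα hσ
  have hsupp : σ.support = Finset.univ :=
    Finset.eq_univ_of_card _ (hcyc.orderOf ▸ hσ)
  have hmoves (x : α) : σ x ≠ x := Perm.mem_support.mp (hsupp ▸ Finset.mem_univ x)
  refine ⟨fun x y => ?_⟩
  obtain ⟨k, hk⟩ := hcyc.sameCycle (hmoves x) (hmoves y)
  exact ⟨⟨σ ^ k, zpow_mem hσH k⟩, hk⟩

/-- For a nontrivial nontransitive subgroup `Ψ ≤ Σ_p`, the order of `N(Ψ)/Ψ` is not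
divisible by `p`. -/
theorem stmt10 {p : ℕ} (hp : p.Prime) (Ψ : Subgroup (Equiv.Perm (Fin p)))
    (hΨ : Ψ ≠ ⊥) (hnt : ¬ ∀ i j : Fin p, ∃ σ ∈ Ψ, σ i = j) :
    ¬ p ∣ Nat.card (Subgroup.normalizer (Ψ : Set (Equiv.Perm (Fin p))) ⧸ Ψ.subgroupOf (Subgroup.normalizer (Ψ : Set (Equiv.Perm (Fin p))))) := by
  set N := Subgroup.normalizer (Ψ : Set (Perm (Fin p)))
  intro hdvd
  have : Fact p.Prime := ⟨hp⟩
  obtain ⟨σ, hσ⟩ := exists_prime_orderOf_dvd_card' (G := N) p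
    (hdvd.trans (Ψ.subgroupOf N).card_quotient_dvd_card)
  have : IsPretransitive N (Fin p) :=
    Perm.isPretransitive_of_mem_of_orderOf_eq_card (by simpa using hp) σ.2
      (by simpa [Subgroup.orderOf_coe] using hσ)
  rcases isPretransitive_or_forall_smul_eq_of_normal (G := N) (X := Fin p) (by simpa using hp)
    (Ψ.subgroupOf N) with htrans | htriv
  · exact hnt fun i j => by
      obtain ⟨τ, hτ⟩ := htrans.exists_smul_eq i j
      exact ⟨τ.1, Subgroup.mem_subgroupOf.mp τ.2, hτ⟩
  · refine hΨ ((Subgroup.eq_bot_iff_forall Ψ).mpr fun τ hτ => Perm.ext fun i => ?_)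
    exact htriv ⟨⟨τ, Subgroup.le_normalizer hτ⟩, Subgroup.mem_subgroupOf.mpr hτ⟩ i
end

section
/- Let $G$ be a finite $p$-group, and let $X$ be a $(G \times \Sigma_p)$-set such that for every $x \in X$, the stabilizer $S_x \leq G \times \Sigma_p$ satisfies: $S_x \cap (1 \times \Sigma_p)$ is nontransitive as a subgroup of $\Sigma_p$. Then the $G$-fixed points of the quotient $X/\Sigma_p$ are in bijection with the quotient by the $\Sigma_p$-conjugation action of the disjoint union, over all homomorphisms $f : G \to \Sigma_p$, of the fixed-point sets $X^{\Gamma_f}$, where $\Gamma_f$ is the graph of $f$. Moreover, for distinct homomorphisms $f \neq f'$, the sets $X^{\Gamma_f}$ and $X^{\Gamma_{f'}}$ are disjoint. -/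
/-!
Write `S_x` for the stabilizer of `x` and `K_x = S_x ∩ (1 × Σ_p)`. If a permutation `c` of
order `p` (a `p`-cycle) normalizes `K_x`, the `K_x`-orbits form a block system for a transitive
group of prime degree, so `K_x` is trivial or transitive; the hypothesis rules out the latter.
In particular `K_x` contains no nontrivial `p`-element. When the `Σ_p`-orbit of `x` is `G`-fixed,
`S_x → G` is onto, so a Sylow `p`-subgroup of `S_x` maps onto the `p`-group `G` with kernel a
`p`-subgroup of `K_x`; it is therefore the graph of a homomorphism `G → Σ_p`. Two graphs fixing
`x` differ by an element of `K_x`, and a nontrivial graph supplies the normalizing `p`-cycle.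
-/

open Equiv MulAction Subgroup

section PrimeDegree

variable {p : ℕ} [Fact p.Prime]

theorem exists_orderOf_pow_eq_prime {M : Type*} [Monoid M] {τ : M} {k : ℕ}
    (hτ : τ ^ p ^ k = 1) (hτ1 : τ ≠ 1) : ∃ m : ℕ, orderOf (τ ^ m) = p := by
  have hp : p.Prime := Fact.out
  obtain ⟨j, -, hj⟩ := (Nat.dvd_prime_pow hp).mp (orderOf_dvd_of_pow_eq_one hτ)
  have hj0 : j ≠ 0 := by
    rintro rfl
    exact hτ1 (orderOf_eq_one_iff.mp (by rw [hj, pow_zero]))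
  exact ⟨_, orderOf_pow_orderOf_div (hj ▸ pow_ne_zero _ hp.ne_zero)
    (hj ▸ dvd_pow_self p hj0)⟩

variable {α : Type*} [Fintype α] [DecidableEq α]

theorem Equiv.Perm.isPretransitive_of_orderOf_eq_card (hα : Fintype.card α = p)
    {H : Subgroup (Perm α)} {c : Perm α} (hc : orderOf c = p) (hcH : c ∈ H) :
    IsPretransitive H α := by
  have hcycle : c.IsCycle := Perm.isCycle_of_prime_order'' (hα ▸ Fact.out) (hc.trans hα.symm)
  have hmoves (i : α) : c i ≠ i := by
    have hsupp : c.support = Finset.univ :=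
      Finset.eq_univ_of_card _ (by rw [← hcycle.orderOf, hc, hα])
    exact Perm.mem_support.mp (hsupp ▸ Finset.mem_univ i)
  refine ⟨fun i j => ?_⟩
  obtain ⟨k, hk⟩ := hcycle.exists_pow_eq (hmoves i) (hmoves j)
  exact ⟨⟨c ^ k, pow_mem hcH k⟩, hk⟩

theorem Equiv.Perm.eq_bot_of_not_isPretransitive (hα : Fintype.card α = p)
    {H : Subgroup (Perm α)} (hH : ¬ IsPretransitive H α) {c : Perm α} (hc : orderOf c = p)
    (hcH : c ∈ normalizer (H : Set (Perm α))) : H = ⊥ := by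
  have := Perm.isPretransitive_of_orderOf_eq_card hα hc hcH
  have : IsPreprimitive (normalizer (H : Set (Perm α))) α :=
    .of_prime_card (by rw [Nat.card_eq_fintype_card, hα]; exact Fact.out)
  rw [Subgroup.eq_bot_iff_forall]
  by_contra! ⟨σ, hσH, hσ1⟩
  obtain ⟨i, hi⟩ : ∃ i, σ i ≠ i := by
    by_contra! h
    exact hσ1 (Perm.ext h)
  let N := H.subgroupOf (normalizer (H : Set (Perm α)))
  have hmoved : fixedPoints N α ≠ .univ := fun h =>
    hi ((h ▸ Set.mem_univ i : i ∈ fixedPoints N α) ⟨⟨σ, le_normalizer hσH⟩, hσH⟩)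
  have := IsQuasiPreprimitive.isPretransitive_of_normal hmoved
  refine hH ⟨fun i j => ?_⟩
  obtain ⟨⟨⟨τ, _⟩, hτ⟩, hτij⟩ := exists_smul_eq N i j
  exact ⟨⟨τ, hτ⟩, hτij⟩

theorem Equiv.Perm.eq_one_of_pow_eq_one_of_not_isPretransitive (hα : Fintype.card α = p)
    {H : Subgroup (Perm α)} (hH : ¬ IsPretransitive H α) {σ : Perm α} (hσH : σ ∈ H)
    {k : ℕ} (hσ : σ ^ p ^ k = 1) : σ = 1 := by
  by_contra hσ1
  obtain ⟨m, hm⟩ := exists_orderOf_pow_eq_prime hσ hσ1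
  have hbot := Perm.eq_bot_of_not_isPretransitive hα hH hm (le_normalizer (pow_mem hσH m))
  exact hσ1 (Subgroup.mem_bot.mp (hbot ▸ hσH))

end PrimeDegree

section Graph

variable {G H : Type*} [Group G] [Group H]

theorem Subgroup.exists_graph_le_of_isPGroup {p : ℕ} [Fact p.Prime] [Finite G] [Finite H]
    (hG : IsPGroup p G) {S : Subgroup (G × H)} (hS : ∀ g : G, ∃ h : H, (g, h) ∈ S)
    (hK : ∀ h : H, ((1 : G), h) ∈ S → ∀ k : ℕ, h ^ p ^ k = 1 → h = 1) :
    ∃ f : G →* H, ∀ g : G, (g, f g) ∈ S := by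
  let π : S →* G := (MonoidHom.fst G H).comp S.subtype
  have hπ : Function.Surjective π := fun g => (hS g).elim fun h hh => ⟨⟨(g, h), hh⟩, rfl⟩
  obtain ⟨P⟩ : Nonempty (Sylow p S) := inferInstance
  have hPG : (P : Subgroup S).map π = ⊤ :=
    ((P.mapSurjective hπ).is_maximal' (hG.to_subgroup ⊤) le_top).symm
  have hsurj : Function.Surjective (π.comp (P : Subgroup S).subtype) := by
    intro g
    obtain ⟨y, hy, rfl⟩ := (hPG ▸ mem_top g : g ∈ (P : Subgroup S).map π)
    exact ⟨⟨y, hy⟩, rfl⟩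
  have hinj : Function.Injective (π.comp (P : Subgroup S).subtype) := by
    refine (injective_iff_map_eq_one _).mpr fun y hy => ?_
    obtain ⟨k, hk⟩ := P.2 y
    have hy1 : (y : G × H).1 = 1 := hy
    have hy2 : (y : G × H).2 = 1 := by
      refine hK _ (hy1 ▸ (y : S).2) k ?_
      simpa using congrArg (fun z : (P : Subgroup S) => ((z : S) : G × H).2) hk
    exact Subtype.ext (Subtype.ext (Prod.ext hy1 hy2))
  let e := MulEquiv.ofBijective _ ⟨hinj, hsurj⟩
  refine ⟨(MonoidHom.snd G H).comp (S.subtype.comp ((P : Subgroup S).subtype.comp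
    e.symm.toMonoidHom)), fun g => ?_⟩
  have hfst : ((e.symm g : S) : G × H).1 = g := e.apply_symm_apply g
  convert (e.symm g : S).2 using 2
  exacts [hfst.symm, rfl]

end Graph

section RightStabilizer

variable {G H X : Type*} [Group G] [Group H] [MulAction (G × H) X]

variable (G H) in
/-- `S_x ∩ (1 × H)`, viewed as a subgroup of `H`. -/
def rightStabilizer (x : X) : Subgroup H :=
  (stabilizer (G × H) x).comap (MonoidHom.inr G H)

theorem mem_rightStabilizer {x : X} {h : H} :
    h ∈ rightStabilizer G H x ↔ ((1 : G), h) • x = x :=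
  Iff.rfl

theorem mem_normalizer_rightStabilizer {x : X} {g : G} {h : H} (hx : (g, h) • x = x) :
    h ∈ normalizer (rightStabilizer G H x : Set H) := by
  have hgh : (g, h) ∈ stabilizer (G × H) x := hx
  refine mem_normalizer_iff.mpr fun k => ⟨fun hk => ?_, fun hk => ?_⟩
  · show ((1 : G), h * k * h⁻¹) ∈ stabilizer (G × H) x
    convert mul_mem (mul_mem hgh hk) (inv_mem hgh) using 1
    ext <;> simp
  · show ((1 : G), k) ∈ stabilizer (G × H) x
    convert mul_mem (mul_mem (inv_mem hgh) hk) hgh using 1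
    ext <;> simp [mul_assoc]

theorem eq_of_graph_fixed_of_rightStabilizer_eq_bot {x : X}
    (hK : rightStabilizer G H x = ⊥) {f f' : G →* H} (hf : ∀ g, (g, f g) • x = x)
    (hf' : ∀ g, (g, f' g) • x = x) : f = f' := by
  ext g
  have hmem : (f g)⁻¹ * f' g ∈ rightStabilizer G H x := by
    rw [mem_rightStabilizer, show ((1 : G), (f g)⁻¹ * f' g) = (g, f g)⁻¹ * (g, f' g) by simp,
      mul_smul, hf', inv_smul_eq_iff, hf]
  rw [hK, mem_bot, inv_mul_eq_one] at hmem
  exact hmem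

end RightStabilizer

theorem rightStabilizer_eq_bot_of_graph_fixed {p : ℕ} [Fact p.Prime] {G X α : Type*} [Group G]
    [Fintype α] [DecidableEq α] [MulAction (G × Perm α) X] (hα : Fintype.card α = p)
    (hG : IsPGroup p G) {x : X} (hK : ¬ IsPretransitive (rightStabilizer G (Perm α) x) α)
    {f : G →* Perm α} (hf : ∀ g, (g, f g) • x = x) {g : G} (hg : f g ≠ 1) :
    rightStabilizer G (Perm α) x = ⊥ := by
  obtain ⟨k, hk⟩ := hG g
  obtain ⟨m, hm⟩ := exists_orderOf_pow_eq_prime (by rw [← map_pow, hk, map_one]) hg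
  refine Perm.eq_bot_of_not_isPretransitive hα hK hm 
    (mem_normalizer_rightStabilizer (g := g ^ m) ?_)
  simpa only [map_pow] using hf (g ^ m)

/-- For a finite `p`-group `G` and a `(G × Σ_p)`-set `X` all of whose stabilizers meet
`1 × Σ_p` nontransitively, the `G`-fixed points of `X/Σ_p` are exactly the `Σ_p`-orbits
of points fixed by the graph of some homomorphism `f : G → Σ_p`; the fixed sets
`X^{Γ_f}` for distinct `f` are disjoint, and `σ ∈ Σ_p` carries `X^{Γ_f}` to
`X^{Γ_{σfσ⁻¹}}`.  (Together these give the stated bijection.) -/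
theorem stmt11 {p : ℕ} [Fact p.Prime] {G X : Type*} [Group G] [Finite G]
    (hG : IsPGroup p G) [MulAction (G × Equiv.Perm (Fin p)) X]
    (hstab : ∀ x : X, ¬ ∀ i j : Fin p, ∃ σ : Equiv.Perm (Fin p),
        ((1 : G), σ) • x = x ∧ σ i = j) :
    -- a Σ_p-orbit is G-fixed in X/Σ_p iff it meets some graph fixed-point set
    (∀ x : X, (∀ g : G, ∃ σ : Equiv.Perm (Fin p), (g, σ) • x = x) ↔
        ∃ f : G →* Equiv.Perm (Fin p), ∀ g : G, (g, f g) • x = x) ∧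
    -- disjointness of the graph fixed-point sets
    (∀ f f' : G →* Equiv.Perm (Fin p), f ≠ f' → ∀ x : X,
        (∀ g : G, (g, f g) • x = x) → ¬ ∀ g : G, (g, f' g) • x = x) ∧
    -- σ carries X^{Γ_f} to X^{Γ_{σfσ⁻¹}}
    (∀ (σ : Equiv.Perm (Fin p)) (f : G →* Equiv.Perm (Fin p)) (x : X),
        (∀ g : G, (g, f g) • x = x) →
        ∀ g : G, (g, σ * f g * σ⁻¹) • (((1 : G), σ) • x) = ((1 : G), σ) • x) := by
  have hK (x : X) : ¬ IsPretransitive (rightStabilizer G (Perm (Fin p)) x) (Fin p) := fun h =>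
    hstab x fun i j =>
      let ⟨⟨σ, hσ⟩, hσij⟩ := h.exists_smul_eq i j
      ⟨σ, hσ, hσij⟩
  refine ⟨fun x => ⟨fun hx => ?_, fun ⟨f, hf⟩ g => ⟨f g, hf g⟩⟩,
    fun f f' hne x hf hf' => hne ?_, fun σ f x hf g => ?_⟩
  · exact exists_graph_le_of_isPGroup (S := stabilizer _ x) hG hx fun σ hσ k hσk =>
      Perm.eq_one_of_pow_eq_one_of_not_isPretransitive (Fintype.card_fin p) (hK x)
        (show σ ∈ rightStabilizer G _ x from hσ) hσk
  · obtain ⟨g, hg⟩ := DFunLike.ne_iff.mp hne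
    refine eq_of_graph_fixed_of_rightStabilizer_eq_bot ?_ hf hf'
    by_cases hfg : f g = 1
    · exact rightStabilizer_eq_bot_of_graph_fixed (Fintype.card_fin p) hG (hK x) hf'
        (hfg ▸ hg).symm
    · exact rightStabilizer_eq_bot_of_graph_fixed (Fintype.card_fin p) hG (hK x) hf hfg
  · rw [smul_smul, show (g, σ * f g * σ⁻¹) * ((1 : G), σ) = ((1 : G), σ) * (g, f g) by
      ext <;> simp [mul_assoc], mul_smul, hf]
end

section
/- Let $p$ be prime, $n \geq s \geq 0$, and let $\mathcal{T}(V)$ be the set of $n \times r$ matrices over $\mathbb{F}_p$ with nullspace a fixed subspace $V \subseteq \mathbb{F}_p^r$ of dimension $r-s$, whose nonzero rows are linearly independent. Let $\Upsilon \subseteq \mathcal{T}(V)$ consist of those matrices whose last $s$ rows are nonzero (equivalently, whose first $n-s$ rows are zero). Then for $A \in \mathcal{T}(V)$ and $b \in B_n$ an invertible upper triangular $n \times n$ matrix over $\mathbb{F}_p$: $bA \in \Upsilon$ if and only if $A \in \Upsilon$ and $b$ lies in the block subgroup $B_{n-s} \times B_s$ of upper triangular matrices whose entries $b_{ij}$ vanish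 for $1 \leq i \leq n-s < j \leq n$. -/
/-!
A matrix with nullspace `V` has rank `s`, and its nonzero rows span its row space, so it lies
in `𝒯(V)` iff it has exactly `s` nonzero rows; hence a matrix of `𝒯(V)` lies in `Υ` iff its
nonzero rows are exactly the last `s`. Row `i` of `bA` is `∑ⱼ bᵢⱼ Aⱼ` with `bᵢᵢ ≠ 0`, so by
independence `bA` has a nonzero row wherever `A` has one, and conversely via `b⁻¹`, which is
again upper triangular. Finally, a zero row `i` of `bA` forces `bᵢⱼ = 0` for every nonzero
row `j` of `A`.
-/

namespace Matrix

variable {K : Type*} [Field K] {m n : Type*} [Fintype m]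

theorem apply_eq_zero_of_vecMul_eq_zero {M : Matrix m n K}
    (hM : LinearIndependent K (fun i : {i // M i ≠ 0} => (M i : n → K))) {c : m → K}
    (hc : c ᵥ* M = 0) {j : m} (hj : M j ≠ 0) : c j = 0 := by
  classical
  rw [vecMul_eq_sum, ← Fintype.sum_subtype_add_sum_subtype (fun i => M i ≠ 0),
    Fintype.sum_eq_zero (fun i : {i // ¬M i ≠ 0} => c i • M i)
      (fun i => by rw [not_not.mp i.2, smul_zero]), add_zero] at hc
  exact Fintype.linearIndependent_iff.mp hM (fun i => c i) hc ⟨j, hj⟩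

theorem mul_apply_eq_zero {b : Matrix m m K} {M : Matrix m n K} {i : m}
    (hb : ∀ j, M j ≠ 0 → b i j = 0) : (b * M) i = 0 := by
  rw [mul_apply_eq_vecMul, vecMul_eq_sum]
  refine Finset.sum_eq_zero fun j _ => ?_
  by_cases hj : M j = 0
  · rw [hj, smul_zero]
  · rw [hb j hj, zero_smul]

theorem mul_apply_ne_zero_of_apply_self_ne_zero {M : Matrix m n K}
    (hM : LinearIndependent K (fun i : {i // M i ≠ 0} => (M i : n → K)))
    {b : Matrix m m K} {i : m} (hb : b i i ≠ 0) (hi : M i ≠ 0) : (b * M) i ≠ 0 :=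
  fun h => hb (apply_eq_zero_of_vecMul_eq_zero hM h hi)

theorem linearIndependent_nonzero_rows_iff [Fintype n] (M : Matrix m n K) :
    LinearIndependent K (fun i : {i // M i ≠ 0} => (M i : n → K)) ↔
      {i | M i ≠ 0}.ncard = M.rank := by
  classical
  have hrange : Set.range (fun i : {i // M i ≠ 0} => M i) = Set.range M.row \ {0} := by
    ext v
    constructor
    · rintro ⟨⟨i, hi⟩, rfl⟩
      exact ⟨⟨i, rfl⟩, hi⟩
    · rintro ⟨⟨i, rfl⟩, hi⟩
      exact ⟨⟨i, hi⟩, rfl⟩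
  rw [linearIndependent_iff_card_eq_finrank_span, hrange, Set.finrank,
    Submodule.span_sdiff_singleton_zero, ← rank_eq_finrank_span_row, ← Nat.card_eq_fintype_card,
    ← Nat.card_coe_set_eq]
  rfl

omit [Fintype m] in
theorem rank_add_finrank_ker_mulVecLin [Fintype n] (M : Matrix m n K) :
    M.rank + Module.finrank K (LinearMap.ker M.mulVecLin) = Fintype.card n := by
  rw [rank, LinearMap.finrank_range_add_finrank_ker, Module.finrank_fintype_fun_eq_card]

theorem ker_mulVecLin_mul_of_isUnit {l : Type*} [Fintype l] [DecidableEq m] {b : Matrix m m K}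
    (hb : IsUnit b) (M : Matrix m l K) :
    LinearMap.ker (b * M).mulVecLin = LinearMap.ker M.mulVecLin := by
  rw [mulVecLin_mul, LinearMap.ker_comp_of_ker_eq_bot]
  exact LinearMap.ker_eq_bot.mpr (mulVec_injective_iff_isUnit.mpr hb)

theorem IsUpperTriangular.apply_self_ne_zero [LinearOrder m] {b : Matrix m m K}
    (hb : b.IsUpperTriangular) (hu : IsUnit b) (i : m) : b i i ≠ 0 := by
  classical
  have hdet := ((isUnit_iff_isUnit_det b).mp hu).ne_zero
  rw [det_of_isUpperTriangular hb] at hdet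
  exact Finset.prod_ne_zero_iff.mp hdet i (Finset.mem_univ i)

theorem apply_ne_zero_of_mul_apply_ne_zero [LinearOrder m] {b : Matrix m m K} {M : Matrix m n K}
    (hbM : LinearIndependent K (fun i : {i // (b * M) i ≠ 0} => ((b * M) i : n → K)))
    (hb : b.IsUpperTriangular) (hu : IsUnit b) {i : m} (hi : (b * M) i ≠ 0) : M i ≠ 0 := by
  classical
  have := hu.invertible
  have hinv : b⁻¹.IsUpperTriangular := blockTriangular_inv_of_blockTriangular hb
  rw [← inv_mul_cancel_left_of_invertible (A := b) M]
  exact mul_apply_ne_zero_of_apply_self_ne_zero hbM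
    (hinv.apply_self_ne_zero (isUnit_nonsing_inv_iff.mpr hu) i) hi

end Matrix

theorem Fin.ncard_setOf_sub_le_val {n s : ℕ} (hsn : s ≤ n) :
    {i : Fin n | n - s ≤ (i : ℕ)}.ncard = s := by
  classical
  have hsplit := Finset.card_filter_add_card_filter_not (s := Finset.univ)
    (fun i : Fin n => (i : ℕ) < n - s)
  rw [Fin.card_filter_val_lt, Finset.card_univ, Fintype.card_fin] at hsplit
  rw [Set.ncard_eq_toFinset_card']
  simp only [Set.toFinset_ofPred, not_lt] at hsplit ⊢
  omega

/-- Let `A ∈ 𝒯(V)` (nullspace `V` of dimension `r-s`, nonzero rows linearly independent)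
and let `b` be an invertible upper triangular `n × n` matrix.  Then `bA ∈ Υ` (the
matrices of `𝒯(V)` whose last `s` rows are nonzero) iff `A ∈ Υ` and `b` lies in the
block subgroup `B_{n-s} × B_s`. -/
theorem stmt18 {p n r s : ℕ} [Fact p.Prime] (hsn : s ≤ n) (hsr : s ≤ r)
    (V : Submodule (ZMod p) (Fin r → ZMod p))
    (hV : Module.finrank (ZMod p) V = r - s)
    (A : Matrix (Fin n) (Fin r) (ZMod p))
    (hAker : LinearMap.ker A.mulVecLin = V)
    (hAind : LinearIndependent (ZMod p)
      (fun i : {i : Fin n // A i ≠ 0} => (A i : Fin r → ZMod p)))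
    (b : Matrix (Fin n) (Fin n) (ZMod p)) (hbU : IsUnit b)
    (hbT : b.BlockTriangular id) :
    (LinearMap.ker (b * A).mulVecLin = V ∧
      LinearIndependent (ZMod p)
        (fun i : {i : Fin n // (b * A) i ≠ 0} => ((b * A) i : Fin r → ZMod p)) ∧
      (∀ i : Fin n, n - s ≤ (i : ℕ) → (b * A) i ≠ 0))
    ↔ ((∀ i : Fin n, n - s ≤ (i : ℕ) → A i ≠ 0) ∧
        (∀ i j : Fin n, (i : ℕ) < n - s → n - s ≤ (j : ℕ) → b i j = 0)) := by
  have linIndep_iff (M : Matrix (Fin n) (Fin r) (ZMod p)) (hM : LinearMap.ker M.mulVecLin = V) :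
      LinearIndependent (ZMod p) (fun i : {i // M i ≠ 0} => (M i : Fin r → ZMod p)) ↔
        {i | M i ≠ 0}.ncard = s := by
    have hrank := M.rank_add_finrank_ker_mulVecLin
    rw [hM, hV, Fintype.card_fin] at hrank
    rw [M.linearIndependent_nonzero_rows_iff, show M.rank = s by omega]
  have tail_eq (M : Matrix (Fin n) (Fin r) (ZMod p)) (hcard : {i | M i ≠ 0}.ncard = s)
      (hM : ∀ i : Fin n, n - s ≤ (i : ℕ) → M i ≠ 0) :
      {i : Fin n | n - s ≤ (i : ℕ)} = {i | M i ≠ 0} :=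
    Set.eq_of_subset_of_ncard_le hM (by rw [hcard, Fin.ncard_setOf_sub_le_val hsn])
  constructor
  · rintro ⟨hker, hind, hnz⟩
    have hbA := tail_eq (b * A) ((linIndep_iff _ hker).mp hind) hnz
    have hAnz (i : Fin n) (hi : n - s ≤ (i : ℕ)) : A i ≠ 0 :=
      Matrix.apply_ne_zero_of_mul_apply_ne_zero hind hbT hbU (hnz i hi)
    refine ⟨hAnz, fun i j hi hj =>
      Matrix.apply_eq_zero_of_vecMul_eq_zero hAind (not_not.mp fun h => ?_) (hAnz j hj)⟩
    have : n - s ≤ (i : ℕ) := hbA.symm.subset (h : (b * A) i ≠ 0)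
    omega
  · rintro ⟨hAnz, hblock⟩
    have hA := tail_eq A ((linIndep_iff A hAker).mp hAind) hAnz
    have hker : LinearMap.ker (b * A).mulVecLin = V := by
      rw [Matrix.ker_mulVecLin_mul_of_isUnit hbU, hAker]
    have hbA : {i : Fin n | n - s ≤ (i : ℕ)} = {i | (b * A) i ≠ 0} := by
      refine Set.Subset.antisymm (fun i hi =>
        Matrix.mul_apply_ne_zero_of_apply_self_ne_zero hAind
          (Matrix.IsUpperTriangular.apply_self_ne_zero hbT hbU i) (hAnz i hi)) fun i h => ?_
      by_contra hi
      exact h (Matrix.mul_apply_eq_zero fun j hj => hblock i j (not_le.mp hi) (hA.symm.subset hj))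
    refine ⟨hker, (linIndep_iff _ hker).mpr (by rw [← hbA, Fin.ncard_setOf_sub_le_val hsn]),
      fun i hi => hbA.subset hi⟩
end
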